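/- arXiv:1812.04476 — 5 statements merged into one kernel-verified Lean document; each statement's English description precedes it below -/
import Mathlib

section
/- For every scale parameter c > 0 and every real ω, the characteristic function of the Lévy distribution with location 0 and scale c satisfies ∫₀^∞ exp(i ω t) · √(c/(2π t³)) · exp(−c/(2t)) dt = exp(−√(c·|ω|) + i · sgn(ω) · √(c·|ω|)), where sgn(ω) is the sign of ω (and the integral is a complex-valued Lebesgue/improper integral). -/
/-!
Substituting `t = c / (2 x²)` turns the characteristic function into `(2 / √π) G(β)` with
`G(β) = ∫₀^∞ exp (-x² - β / x²) dx` and `β = -i c ω / 2`. For real `b > 0` the substitution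
`x ↦ √b / x` shows that `G(b)` is half the integral of `(1 + √b / x²) exp (-x² - b / x²)`, and
`u = x - √b / x` turns the latter into `e^{-2√b}` times the Gaussian integral, so
`G(b) = (√π / 2) e^{-2√b}`. Both sides are holomorphic on `Re β > 0`, so they agree there by the
identity theorem, and by continuity (dominated convergence) also on the boundary `Re β = 0`.
-/

open MeasureTheory Set

/-- The Lévy density with location 0 and scale `c`. -/
noncomputable def levyPDF (c x : ℝ) : ℝ :=
  if 0 < x then Real.sqrt (c / (2 * Real.pi * x ^ 3)) * Real.exp (-c / (2 * x)) else 0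

open Complex Real Filter Topology

section ChangeOfVariables

variable {E : Type*} [NormedAddCommGroup E] [NormedSpace ℝ E]

theorem integral_comp_div_Ioi {a : ℝ} (ha : 0 < a) (g : ℝ → E) :
    ∫ x in Ioi 0, (a / x ^ 2) • g (a / x) = ∫ t in Ioi 0, g t := by
  have himage : (fun x ↦ a / x) '' Ioi 0 = Ioi 0 := by
    ext t
    refine ⟨?_, fun ht ↦ ⟨a / t, div_pos ha ht, div_div_cancel₀ ha.ne'⟩⟩
    rintro ⟨x, hx, rfl⟩
    exact div_pos ha hx
  have hderiv (x : ℝ) (hx : x ∈ Ioi 0) :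
      HasDerivWithinAt (fun x ↦ a / x) (-(a / x ^ 2)) (Ioi 0) x := by
    simpa [div_eq_mul_inv] using ((hasDerivAt_inv (ne_of_gt hx)).const_mul a).hasDerivWithinAt
  have hanti : StrictAntiOn (fun x ↦ a / x) (Ioi 0) := fun x hx _ _ hxy ↦
    div_lt_div_of_pos_left ha hx hxy
  have := integral_image_eq_integral_abs_deriv_smul measurableSet_Ioi hderiv hanti.injOn g
  rw [himage] at this
  rw [this]
  refine setIntegral_congr_fun measurableSet_Ioi fun x hx ↦ ?_
  rw [abs_neg, abs_of_pos (div_pos ha (pow_pos hx 2))]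

theorem integral_comp_sq_Ioi (g : ℝ → E) :
    ∫ x in Ioi 0, (2 * x) • g (x ^ 2) = ∫ t in Ioi 0, g t := by
  convert integral_comp_rpow_Ioi_of_pos (g := g) two_pos using 1
  refine setIntegral_congr_fun measurableSet_Ioi fun x _ ↦ ?_
  norm_num

theorem integral_comp_div_sq_Ioi {a : ℝ} (ha : 0 < a) (g : ℝ → E) :
    ∫ x in Ioi 0, (2 * a / x ^ 3) • g (a / x ^ 2) = ∫ t in Ioi 0, g t := by
  calc ∫ x in Ioi 0, (2 * a / x ^ 3) • g (a / x ^ 2)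
      = ∫ x in Ioi 0, (2 * x) • (a / (x ^ 2) ^ 2) • g (a / x ^ 2) := by
        refine setIntegral_congr_fun measurableSet_Ioi fun x hx ↦ ?_
        have hx : x ≠ 0 := ne_of_gt hx
        rw [smul_smul]
        congr 1
        field_simp
    _ = ∫ t in Ioi 0, g t :=
        (integral_comp_sq_Ioi fun s ↦ (a / s ^ 2) • g (a / s)).trans (integral_comp_div_Ioi ha g)

theorem integral_comp_sub_div_Ioi {a : ℝ} (ha : 0 < a) (g : ℝ → E) :
    ∫ x in Ioi 0, (1 + a / x ^ 2) • g (x - a / x) = ∫ u, g u := by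
  have himage : (fun x ↦ x - a / x) '' Ioi 0 = univ := by
    refine eq_univ_of_forall fun u ↦ ?_
    -- the positive root of `x ^ 2 - u * x - a`
    set s := √(u ^ 2 + 4 * a)
    have hs : s ^ 2 = u ^ 2 + 4 * a := sq_sqrt (by positivity)
    have hus : |u| < s := by
      rw [← sqrt_sq_eq_abs]
      exact sqrt_lt_sqrt (sq_nonneg u) (by linarith)
    have hx : 0 < (u + s) / 2 := by linarith [neg_abs_le u]
    refine ⟨(u + s) / 2, hx, ?_⟩
    have hdiv : a / ((u + s) / 2) = (s - u) / 2 := by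
      rw [div_eq_iff hx.ne']
      linear_combination -hs / 4
    simp only [hdiv]
    ring
  have hderiv (x : ℝ) (hx : x ∈ Ioi 0) :
      HasDerivWithinAt (fun x ↦ x - a / x) (1 + a / x ^ 2) (Ioi 0) x := by
    rw [show 1 + a / x ^ 2 = 1 - a * -(x ^ 2)⁻¹ by ring]
    exact ((hasDerivAt_id' x).sub ((hasDerivAt_inv (ne_of_gt hx)).const_mul a)).hasDerivWithinAt
  have hmono : StrictMonoOn (fun x ↦ x - a / x) (Ioi 0) := fun x hx y _ hxy ↦ by
    have := div_lt_div_of_pos_left ha hx hxy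
    simp only
    linarith
  have := integral_image_eq_integral_abs_deriv_smul measurableSet_Ioi hderiv hmono.injOn g
  rw [himage, setIntegral_univ] at this
  rw [this]
  refine setIntegral_congr_fun measurableSet_Ioi fun x hx ↦ ?_
  rw [abs_of_pos (by positivity)]

end ChangeOfVariables

theorem norm_cexp_neg_sq_sub_div_sq (β : ℂ) (x : ℝ) :
    ‖cexp (-(x : ℂ) ^ 2 - β / (x : ℂ) ^ 2)‖ = rexp (-x ^ 2 - β.re / x ^ 2) := by
  rw [norm_exp, ← ofReal_pow, sub_re, div_ofReal_re, neg_re, ofReal_re]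

theorem norm_cexp_neg_sq_sub_div_sq_le {β : ℂ} (hβ : 0 ≤ β.re) (x : ℝ) :
    ‖cexp (-(x : ℂ) ^ 2 - β / (x : ℂ) ^ 2)‖ ≤ rexp (-x ^ 2) := by
  rw [norm_cexp_neg_sq_sub_div_sq, exp_le_exp]
  linarith [div_nonneg hβ (sq_nonneg x)]

theorem integrable_exp_neg_sq : Integrable fun x : ℝ ↦ rexp (-x ^ 2) := by
  simpa using integrable_exp_neg_mul_sq one_pos

theorem integrable_cexp_neg_sq_sub_div_sq {β : ℂ} (hβ : 0 ≤ β.re) :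
    Integrable fun x : ℝ ↦ cexp (-(x : ℂ) ^ 2 - β / (x : ℂ) ^ 2) :=
  integrable_exp_neg_sq.mono' (by fun_prop) (.of_forall (norm_cexp_neg_sq_sub_div_sq_le hβ))

theorem integral_exp_neg_sq_sub_div_sq_Ioi {b : ℝ} (hb : 0 < b) :
    ∫ x in Ioi 0, rexp (-x ^ 2 - b / x ^ 2) = √π / 2 * rexp (-2 * √b) := by
  set f : ℝ → ℝ := fun x ↦ rexp (-x ^ 2 - b / x ^ 2)
  set a := √b
  have ha : 0 < a := sqrt_pos.2 hb
  have hab : a ^ 2 = b := sq_sqrt hb.le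
  have hf : IntegrableOn f (Ioi 0) := by
    have := (integrable_cexp_neg_sq_sub_div_sq (β := b) (by simpa using hb.le)).norm
    simpa [norm_cexp_neg_sq_sub_div_sq] using this.integrableOn
  -- `f` is invariant under `x ↦ a / x`
  have hinv : ∫ x in Ioi 0, a / x ^ 2 * f x = ∫ x in Ioi 0, f x := by
    refine Eq.trans ?_ (integral_comp_div_Ioi ha f)
    refine setIntegral_congr_fun measurableSet_Ioi fun x hx ↦ ?_
    have hx : x ≠ 0 := ne_of_gt hx
    have : -x ^ 2 - b / x ^ 2 = -(a / x) ^ 2 - b / (a / x) ^ 2 := by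
      rw [← hab]
      field_simp
      ring
    simp only [f, smul_eq_mul, this]
  have hweighted : ∫ x in Ioi 0, (1 + a / x ^ 2) * f x = rexp (-2 * a) * √π := by
    have hcomplete : ∀ x ∈ Ioi (0 : ℝ), f x = rexp (-2 * a) * rexp (-(x - a / x) ^ 2) := by
      intro x hx
      have hx : x ≠ 0 := ne_of_gt hx
      simp only [f, ← Real.exp_add]
      rw [← hab]
      congr 1
      field_simp
      ring
    rw [setIntegral_congr_fun measurableSet_Ioi fun x hx ↦ by rw [hcomplete x hx, mul_left_comm],
      integral_const_mul]
    have := integral_comp_sub_div_Ioi ha fun u ↦ rexp (-u ^ 2)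
    simp only [smul_eq_mul] at this
    rw [this]
    simpa using integral_gaussian 1
  have hsum : IntegrableOn (fun x ↦ (1 + a / x ^ 2) * f x) (Ioi 0) :=
    Integrable.of_integral_ne_zero (by rw [hweighted]; positivity)
  have hrest : IntegrableOn (fun x ↦ a / x ^ 2 * f x) (Ioi 0) :=
    (hsum.sub hf).congr_fun (fun x _ ↦ by simp only [Pi.sub_apply]; ring) measurableSet_Ioi
  have hsplit : ∫ x in Ioi 0, (1 + a / x ^ 2) * f x
      = (∫ x in Ioi 0, f x) + ∫ x in Ioi 0, a / x ^ 2 * f x := by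
    rw [← integral_add hf hrest]
    simp only [add_mul, one_mul]
  rw [hsplit, hinv] at hweighted
  linarith

noncomputable def expNegSqSubDivSqIntegral (β : ℂ) : ℂ :=
  ∫ x : ℝ in Ioi 0, cexp (-(x : ℂ) ^ 2 - β / (x : ℂ) ^ 2)

theorem expNegSqSubDivSqIntegral_ofReal {b : ℝ} (hb : 0 < b) :
    expNegSqSubDivSqIntegral b = √π / 2 * cexp (-2 * (b : ℂ) ^ (2⁻¹ : ℂ)) := by
  have hsqrt : (b : ℂ) ^ (2⁻¹ : ℂ) = (√b : ℂ) := by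
    rw [sqrt_eq_rpow, ofReal_cpow hb.le]
    norm_num
  have hreal (x : ℝ) :
      cexp (-(x : ℂ) ^ 2 - b / (x : ℂ) ^ 2) = (rexp (-x ^ 2 - b / x ^ 2) : ℂ) := by
    push_cast
    rfl
  rw [expNegSqSubDivSqIntegral, hsqrt]
  simp_rw [hreal]
  rw [integral_complex_ofReal, integral_exp_neg_sq_sub_div_sq_Ioi hb]
  push_cast
  rfl

theorem continuousOn_expNegSqSubDivSqIntegral :
    ContinuousOn expNegSqSubDivSqIntegral {β | 0 ≤ β.re} :=
  continuousOn_of_dominated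
    (F := fun β (x : ℝ) ↦ cexp (-(x : ℂ) ^ 2 - β / (x : ℂ) ^ 2))
    (fun _ hβ ↦ (integrable_cexp_neg_sq_sub_div_sq hβ).aestronglyMeasurable.restrict)
    (fun _ hβ ↦ .of_forall (norm_cexp_neg_sq_sub_div_sq_le hβ))
    integrable_exp_neg_sq.restrict (.of_forall fun _ ↦ by fun_prop)

theorem differentiableAt_expNegSqSubDivSqIntegral {β : ℂ} (hβ : 0 < β.re) :
    DifferentiableAt ℂ expNegSqSubDivSqIntegral β := by
  set δ := β.re / 2
  have hδ : 0 < δ := half_pos hβ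
  have hs : {β' : ℂ | δ < β'.re} ∈ 𝓝 β :=
    (isOpen_lt continuous_const continuous_re).mem_nhds (half_lt_self hβ)
  have hbound (x : ℝ) (β' : ℂ) (hβ' : β' ∈ {β' : ℂ | δ < β'.re}) :
      ‖cexp (-(x : ℂ) ^ 2 - β' / (x : ℂ) ^ 2) * -(1 / (x : ℂ) ^ 2)‖ ≤ δ⁻¹ * rexp (-x ^ 2) := by
    have hmul : δ / x ^ 2 * rexp (-(δ / x ^ 2)) ≤ 1 :=
      (mul_exp_neg_le_exp_neg_one _).trans (exp_le_one_iff.2 (by norm_num))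
    rw [norm_mul, norm_cexp_neg_sq_sub_div_sq, norm_neg, norm_div, norm_one, norm_pow, norm_real,
      norm_eq_abs, sq_abs]
    calc rexp (-x ^ 2 - β'.re / x ^ 2) * (1 / x ^ 2)
        ≤ rexp (-x ^ 2 - δ / x ^ 2) * (1 / x ^ 2) := by
          gcongr
          exact hβ'.le
      _ = δ⁻¹ * (δ / x ^ 2 * rexp (-(δ / x ^ 2))) * rexp (-x ^ 2) := by
          rw [sub_eq_add_neg, Real.exp_add]
          field_simp
      _ ≤ δ⁻¹ * rexp (-x ^ 2) := by
          grw [hmul, mul_one]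
  obtain ⟨-, hderiv⟩ := hasDerivAt_integral_of_dominated_loc_of_deriv_le
    (μ := volume.restrict (Ioi 0))
    (F := fun β (x : ℝ) ↦ cexp (-(x : ℂ) ^ 2 - β / (x : ℂ) ^ 2))
    (F' := fun β (x : ℝ) ↦ cexp (-(x : ℂ) ^ 2 - β / (x : ℂ) ^ 2) * -(1 / (x : ℂ) ^ 2))
    hs (.of_forall fun _ ↦ by fun_prop) (integrable_cexp_neg_sq_sub_div_sq hβ.le).integrableOn
    (by fun_prop) (.of_forall hbound) (integrable_exp_neg_sq.const_mul _).integrableOn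
    (.of_forall fun x β' _ ↦ (((hasDerivAt_id' β').div_const _).const_sub _).cexp)
  exact hderiv.differentiableAt

theorem expNegSqSubDivSqIntegral_of_re_pos {β : ℂ} (hβ : 0 < β.re) :
    expNegSqSubDivSqIntegral β = √π / 2 * cexp (-2 * β ^ (2⁻¹ : ℂ)) := by
  have hopen : IsOpen {z : ℂ | 0 < z.re} := isOpen_lt continuous_const continuous_re
  have hG : AnalyticOnNhd ℂ expNegSqSubDivSqIntegral {z : ℂ | 0 < z.re} :=
    DifferentiableOn.analyticOnNhd
      (fun z hz ↦ (differentiableAt_expNegSqSubDivSqIntegral hz).differentiableWithinAt) hopen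
  have hR :
      AnalyticOnNhd ℂ (fun z : ℂ ↦ √π / 2 * cexp (-2 * z ^ (2⁻¹ : ℂ))) {z : ℂ | 0 < z.re} :=
    DifferentiableOn.analyticOnNhd (fun z hz ↦
      ((((differentiableAt_id.cpow_const (.inl hz)).const_mul _).cexp).const_mul _)
        |>.differentiableWithinAt) hopen
  have hreal : ∃ᶠ x : ℝ in 𝓝[≠] 1,
      expNegSqSubDivSqIntegral x = √π / 2 * cexp (-2 * x ^ (2⁻¹ : ℂ)) :=
    ((eventually_gt_nhds one_pos).filter_mono nhdsWithin_le_nhds).frequently.mono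
      fun x hx ↦ expNegSqSubDivSqIntegral_ofReal hx
  have hofReal : Tendsto ((↑) : ℝ → ℂ) (𝓝[≠] 1) (𝓝[≠] 1) :=
    continuous_ofReal.continuousWithinAt.tendsto_nhdsWithin fun x hx ↦ by simpa using hx
  exact hG.eqOn_of_preconnected_of_frequently_eq hR (convex_halfSpace_re_gt 0).isPreconnected
    (z₀ := 1) (by simp) (hofReal.frequently hreal) hβ

theorem expNegSqSubDivSqIntegral_of_re_nonneg {β : ℂ} (hβ : 0 ≤ β.re) :
    expNegSqSubDivSqIntegral β = √π / 2 * cexp (-2 * β ^ (2⁻¹ : ℂ)) := by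
  have hR :
      ContinuousOn (fun z : ℂ ↦ √π / 2 * cexp (-2 * z ^ (2⁻¹ : ℂ))) {z : ℂ | 0 ≤ z.re} :=
    fun z hz ↦ (continuousAt_const.mul ((continuousAt_cpow_const_of_re_pos (.inl hz)
      (by norm_num)).const_mul _).cexp).continuousWithinAt
  exact EqOn.of_subset_closure (s := {z : ℂ | 0 < z.re})
    (fun z hz ↦ expNegSqSubDivSqIntegral_of_re_pos hz) continuousOn_expNegSqSubDivSqIntegral hR
    (fun z (hz : 0 < z.re) ↦ hz.le) (closure_setOfPred_lt_re 0).ge hβ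

theorem cpow_inv_two_neg_mul_I (y : ℝ) :
    (-(y * I)) ^ (2⁻¹ : ℂ) = √(2 * |y|) / 2 * (1 - Real.sign y * I) := by
  set w : ℂ := √(2 * |y|) / 2 * (1 - Real.sign y * I)
  have hw : |w.arg| < π / 2 := by
    refine abs_arg_lt_pi_div_two_iff.2 ?_
    rcases eq_or_ne y 0 with rfl | hy
    · simp [w]
    · left
      simp [w]
      positivity
  have hsq : w ^ 2 = -(y * I) := by
    have hroot : ((√(2 * |y|) : ℝ) : ℂ) ^ 2 = 2 * |y| := by
      rw [← ofReal_pow, sq_sqrt (by positivity)]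
      push_cast
      rfl
    rcases lt_trichotomy y 0 with hy | rfl | hy
    · simp only [w, Real.sign_of_neg hy, abs_of_neg hy] at hroot ⊢
      push_cast at hroot ⊢
      linear_combination (1 + I) ^ 2 / 4 * hroot - y / 2 * I_sq
    · simp [w]
    · simp only [w, Real.sign_of_pos hy, abs_of_pos hy] at hroot ⊢
      push_cast at hroot ⊢
      linear_combination (1 - I) ^ 2 / 4 * hroot + y / 2 * I_sq
  rw [← hsq, pow_cpow_ofNat_inv (abs_lt.1 hw).1 (abs_lt.1 hw).2.le]

theorem integral_cexp_mul_levy_density {c : ℝ} (hc : 0 < c) (ω : ℝ) :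
    (∫ t in Ioi (0 : ℝ), cexp (I * ω * t) *
        ((√(c / (2 * π * t ^ 3)) * rexp (-c / (2 * t)) : ℝ) : ℂ))
      = 2 / √π * expNegSqSubDivSqIntegral (-(↑(c * ω / 2) * I)) := by
  rw [← integral_comp_div_sq_Ioi (half_pos hc), expNegSqSubDivSqIntegral, ← integral_const_mul]
  refine setIntegral_congr_fun measurableSet_Ioi fun x hx ↦ ?_
  have hx : 0 < x := hx
  have hdensity : 2 * (c / 2) / x ^ 3 * (√(c / (2 * π * (c / 2 / x ^ 2) ^ 3)) *
      rexp (-c / (2 * (c / 2 / x ^ 2)))) = 2 / √π * rexp (-x ^ 2) := by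
    have hsq : c / (2 * π * (c / 2 / x ^ 2) ^ 3) = (2 * x ^ 3 / (c * √π)) ^ 2 := by
      field_simp
      rw [sq_sqrt pi_pos.le]
    have hexp : -c / (2 * (c / 2 / x ^ 2)) = -x ^ 2 := by
      field_simp
    rw [hsq, sqrt_sq (by positivity), hexp]
    field_simp
  rw [real_smul, mul_left_comm, ← ofReal_mul, hdensity]
  push_cast
  rw [mul_left_comm, ← Complex.exp_add]
  congr 2
  ring

/-- The characteristic function of the Lévy distribution with location 0 and scale `c`. -/
theorem levy_charFun (c ω : ℝ) (hc : 0 < c) :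
    (∫ t in Set.Ioi (0:ℝ),
        Complex.exp (Complex.I * ω * t) *
          ((Real.sqrt (c / (2 * Real.pi * t ^ 3)) * Real.exp (-c / (2 * t)) : ℝ) : ℂ))
      = Complex.exp (-(Real.sqrt (c * |ω|) : ℝ)
          + Complex.I * (Real.sign ω : ℝ) * (Real.sqrt (c * |ω|) : ℝ)) := by
  have hsign : Real.sign (c * ω / 2) = Real.sign ω := by
    rcases lt_trichotomy ω 0 with hω | rfl | hω
    · rw [Real.sign_of_neg hω, Real.sign_of_neg (by nlinarith)]
    · simp
    · rw [Real.sign_of_pos hω, Real.sign_of_pos (by positivity)]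
  have hscale : 2 * |c * ω / 2| = c * |ω| := by
    rw [abs_div, abs_mul, abs_of_pos hc, abs_two]
    ring
  have hπ : (√π : ℂ) ≠ 0 := ofReal_ne_zero.2 (sqrt_pos.2 pi_pos).ne'
  rw [integral_cexp_mul_levy_density hc, expNegSqSubDivSqIntegral_of_re_nonneg (by simp),
    cpow_inv_two_neg_mul_I, hsign, hscale, ← mul_assoc, div_mul_div_cancel₀ hπ,
    div_self two_ne_zero, one_mul]
  ring_nf
end

section
/- (Theorem 1) Let c > 0 and let T₁ and T₂ be independent random variables, each with the Lévy density with scale c. Then the characteristic function of the noise L_n = T₂ − T₁ satisfies, for every real ω: ∫₀^∞ ∫₀^∞ exp(i ω (t₂ − t₁)) · f_c(t₂) · f_c(t₁) dt₁ dt₂ = exp(−2√(c·|ω|)) = exp(−√(c_B · |ω|)) with c_B = 4c. In particular the characteristic function is real and symmetric in ω, so L_n is a symmetric stable random variable with stability index 1/2, skewness 0, and scale c_B = 4c. -/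
open MeasureTheory Set

/-!
The substitution `t = c / (2u²)` turns the Laplace transform `L(s) = ∫ f_c(t) e^{-st} dt` of
the Lévy density into Glasser's integral `∫₀^∞ exp (-(u² + a²/u²)) du = (√π / 2) e^{-2a}` with
`a² = cs/2`, and the Cauchy–Schlömilch substitution `w = u - a/u` reduces that to a Gaussian
integral; hence `L(s) = exp (-√(2cs))` for `s ≥ 0`. Both `L(z)` and `exp (-(2cz)^{1/2})` are
holomorphic on `Re z > 0` and continuous on `Re z ≥ 0`, so they agree on the closed half-plane.
Finally the characteristic function of `T₂ - T₁` factors as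
`L(-iω) L(iω) = exp (-((2ciω)^{1/2} + (-2ciω)^{1/2})) = exp (-2√(c|ω|))`.
-/

open Filter Topology

section ChangeOfVariables

variable {E : Type*} [NormedAddCommGroup E] [NormedSpace ℝ E] {k : ℝ}

lemma smul_comp_div_pow_eq_smul_rpow {u : ℝ} (hu : 0 < u) (n : ℕ) (f : ℝ → E) :
    (n * k / u ^ (n + 1)) • f (k / u ^ n) =
      k • ((|-(n : ℝ)| * u ^ (-(n : ℝ) - 1)) • f (k * u ^ (-(n : ℝ)))) := by
  rw [← neg_add', Real.rpow_neg hu.le, Real.rpow_neg hu.le, ← Nat.cast_add_one,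
    Real.rpow_natCast, Real.rpow_natCast, abs_neg, Nat.abs_cast, smul_smul, div_eq_mul_inv k]
  congr 1
  field_simp

theorem integral_Ioi_comp_div_pow (hk : 0 < k) {n : ℕ} (hn : n ≠ 0) (f : ℝ → E) :
    ∫ u in Ioi 0, (n * k / u ^ (n + 1)) • f (k / u ^ n) = ∫ t in Ioi 0, f t := by
  have h := integral_comp_rpow_Ioi (fun y => f (k * y)) (p := -n) (by simpa using hn)
  rw [integral_comp_mul_left_Ioi f 0 hk, mul_zero] at h
  rw [← smul_inv_smul₀ hk.ne' (∫ t in Ioi 0, f t), ← h, ← integral_smul]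
  exact setIntegral_congr_fun measurableSet_Ioi fun u hu => smul_comp_div_pow_eq_smul_rpow hu n f

theorem integrableOn_Ioi_comp_div_pow_iff (hk : 0 < k) {n : ℕ} (hn : n ≠ 0) (f : ℝ → E) :
    IntegrableOn (fun u => (n * k / u ^ (n + 1)) • f (k / u ^ n)) (Ioi 0) ↔
      IntegrableOn f (Ioi 0) := by
  have h := integrableOn_Ioi_comp_rpow_iff (fun y => f (k * y)) (p := -n) (by simpa using hn)
  rw [integrableOn_Ioi_comp_mul_left_iff f 0 hk, mul_zero] at h
  rw [← h, integrableOn_congr_fun (s := Ioi 0)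
    (fun u hu => smul_comp_div_pow_eq_smul_rpow (k := k) hu n f) measurableSet_Ioi]
  exact integrable_smul_iff hk.ne' _

end ChangeOfVariables

section CauchySchloemilch

variable {E : Type*} [NormedAddCommGroup E] [NormedSpace ℝ E] {a : ℝ}

lemma image_Ioi_sub_div (ha : 0 < a) : (fun u : ℝ => u - a / u) '' Ioi 0 = univ := by
  refine eq_univ_of_forall fun w => ?_
  have hroot : 0 < w ^ 2 + 4 * a := by positivity
  have hsq : √(w ^ 2 + 4 * a) ^ 2 = w ^ 2 + 4 * a := Real.sq_sqrt hroot.le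
  have habs : |w| < √(w ^ 2 + 4 * a) := by
    rw [← Real.sqrt_sq_eq_abs]
    exact Real.sqrt_lt_sqrt (sq_nonneg w) (by linarith)
  have hpos : 0 < w + √(w ^ 2 + 4 * a) := by linarith [neg_abs_le w]
  refine ⟨_, half_pos hpos, ?_⟩
  field_simp
  linear_combination hsq

lemma strictMonoOn_sub_div (ha : 0 ≤ a) : StrictMonoOn (fun u : ℝ => u - a / u) (Ioi 0) :=
  fun u hu v _ huv => by
    have : a / v ≤ a / u := div_le_div_of_nonneg_left ha hu huv.le
    simp only
    linarith

lemma hasDerivAt_sub_div {u : ℝ} (hu : u ≠ 0) :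
    HasDerivAt (fun u : ℝ => u - a / u) (1 + a / u ^ 2) u := by
  have h := (hasDerivAt_id' u).sub ((hasDerivAt_inv hu).const_mul a)
  simp only [← div_eq_mul_inv] at h
  exact h.congr_deriv (by ring)

lemma abs_one_add_div_sq (ha : 0 ≤ a) (u : ℝ) : |1 + a / u ^ 2| = 1 + a / u ^ 2 :=
  abs_of_pos (by positivity)

theorem integral_Ioi_comp_sub_div (ha : 0 < a) (f : ℝ → E) :
    ∫ u in Ioi 0, (1 + a / u ^ 2) • f (u - a / u) = ∫ w, f w := by
  conv_rhs => rw [← setIntegral_univ, ← image_Ioi_sub_div ha]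
  rw [integral_image_eq_integral_abs_deriv_smul measurableSet_Ioi
      (fun u hu => (hasDerivAt_sub_div (ne_of_gt hu)).hasDerivWithinAt)
      (strictMonoOn_sub_div ha.le).injOn]
  simp only [abs_one_add_div_sq ha.le]

theorem integrableOn_Ioi_comp_sub_div_iff (ha : 0 < a) (f : ℝ → E) :
    IntegrableOn (fun u => (1 + a / u ^ 2) • f (u - a / u)) (Ioi 0) ↔ Integrable f := by
  rw [← integrableOn_univ, ← image_Ioi_sub_div ha,
    integrableOn_image_iff_integrableOn_abs_deriv_smul measurableSet_Ioi
      (fun u hu => (hasDerivAt_sub_div (ne_of_gt hu)).hasDerivWithinAt)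
      (strictMonoOn_sub_div ha.le).injOn]
  simp only [abs_one_add_div_sq ha.le]

theorem integral_Ioi_comp_sub_div_of_even (ha : 0 < a) {f : ℝ → E} (hf : Integrable f)
    (heven : ∀ x, f (-x) = f x) :
    ∫ u in Ioi 0, f (u - a / u) = (2 : ℝ)⁻¹ • ∫ w, f w := by
  have hweighted := (integrableOn_Ioi_comp_sub_div_iff ha f).2 hf
  have hplain : IntegrableOn (fun u => f (u - a / u)) (Ioi 0) := by
    refine (hweighted.bdd_smul 1 (φ := fun u => (1 + a / u ^ 2)⁻¹)
      (by fun_prop : Measurable _).aestronglyMeasurable (Eventually.of_forall fun u => ?_)).congr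
      (Eventually.of_forall fun u => ?_)
    · rw [norm_inv, Real.norm_of_nonneg (by positivity)]
      exact inv_le_one_of_one_le₀ (le_add_of_nonneg_right (by positivity))
    · exact inv_smul_smul₀ (ne_of_gt (by positivity)) _
  -- `u ↦ a / u` sends `u - a / u` to its negative and turns the weight `a / u²` into `1`.
  have hweight_invariant :
      ∫ u in Ioi 0, (a / u ^ 2) • f (u - a / u) = ∫ u in Ioi 0, f (u - a / u) := by
    rw [← integral_Ioi_comp_div_pow ha one_ne_zero (fun v => f (v - a / v))]
    refine setIntegral_congr_fun measurableSet_Ioi fun u (hu : 0 < u) => ?_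
    rw [div_div_cancel₀ ha.ne', ← heven, neg_sub]
    simp
  have hrest : IntegrableOn (fun u => (a / u ^ 2) • f (u - a / u)) (Ioi 0) :=
    (hweighted.sub hplain).congr (ae_of_all _ fun u => by simp [add_smul])
  calc ∫ u in Ioi 0, f (u - a / u)
      = (2 : ℝ)⁻¹ • ((∫ u in Ioi 0, f (u - a / u)) +
          ∫ u in Ioi 0, (a / u ^ 2) • f (u - a / u)) := by
        rw [hweight_invariant, ← two_smul ℝ, inv_smul_smul₀ two_ne_zero]
    _ = (2 : ℝ)⁻¹ • ∫ u in Ioi 0, (1 + a / u ^ 2) • f (u - a / u) := by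
        simp_rw [← integral_add hplain hrest, add_smul, one_smul]
    _ = (2 : ℝ)⁻¹ • ∫ w, f w := by rw [integral_Ioi_comp_sub_div ha]

end CauchySchloemilch

theorem integral_Ioi_exp_neg_sq_add_sq_div_sq {a : ℝ} (ha : 0 ≤ a) :
    ∫ u in Ioi 0, Real.exp (-(u ^ 2 + a ^ 2 / u ^ 2)) = √Real.pi / 2 * Real.exp (-(2 * a)) := by
  rcases ha.eq_or_lt with rfl | ha
  · simpa using integral_gaussian_Ioi 1
  have hsquare : ∀ u ∈ Ioi (0 : ℝ),
      Real.exp (-(u ^ 2 + a ^ 2 / u ^ 2)) =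
        Real.exp (-(2 * a)) * Real.exp (-(u - a / u) ^ 2) := by
    intro u (hu : 0 < u)
    rw [← Real.exp_add]
    congr 1
    field_simp
    ring
  have hgauss : Integrable fun w : ℝ => Real.exp (-w ^ 2) := by
    simpa using integrable_exp_neg_mul_sq one_pos
  rw [setIntegral_congr_fun measurableSet_Ioi hsquare, integral_const_mul,
    integral_Ioi_comp_sub_div_of_even ha hgauss (fun w => by rw [neg_sq])]
  have := integral_gaussian 1
  simp only [neg_mul, one_mul, div_one] at this
  rw [this, smul_eq_mul]
  ring

section Levy

variable {c : ℝ}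

lemma levyPDF_nonneg (c x : ℝ) : 0 ≤ levyPDF c x := by
  unfold levyPDF
  split_ifs <;> positivity

lemma measurable_levyPDF (c : ℝ) : Measurable (levyPDF c) :=
  Measurable.ite measurableSet_Ioi (by fun_prop) measurable_const

lemma levyPDF_div_sq (hc : 0 < c) {u : ℝ} (hu : 0 < u) :
    c / u ^ 3 * levyPDF c (c / 2 / u ^ 2) = 2 / √Real.pi * Real.exp (-u ^ 2) := by
  have hexp : -c / (2 * (c / 2 / u ^ 2)) = -u ^ 2 := by field_simp
  have hsqrt : √(c / (2 * Real.pi * (c / 2 / u ^ 2) ^ 3)) = 2 * u ^ 3 / c / √Real.pi := by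
    rw [← Real.sqrt_sq (by positivity : 0 ≤ 2 * u ^ 3 / c), ← Real.sqrt_div' _ Real.pi_pos.le]
    congr 1
    field_simp
  rw [levyPDF, if_pos (by positivity), hexp, hsqrt]
  field_simp

lemma integrableOn_levyPDF (hc : 0 < c) : IntegrableOn (levyPDF c) (Ioi 0) := by
  refine (integrableOn_Ioi_comp_div_pow_iff (half_pos hc) two_ne_zero _).1 ?_
  refine IntegrableOn.congr_fun (((integrable_exp_neg_mul_sq one_pos).integrableOn).const_mul
    (2 / √Real.pi)) (fun u (hu : 0 < u) => ?_) measurableSet_Ioi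
  rw [smul_eq_mul, Nat.cast_ofNat, mul_div_cancel₀ _ two_ne_zero, levyPDF_div_sq hc hu,
    neg_one_mul]

theorem integral_levyPDF_mul_exp_neg (hc : 0 < c) {s : ℝ} (hs : 0 ≤ s) :
    ∫ t in Ioi 0, levyPDF c t * Real.exp (-(s * t)) = Real.exp (-√(2 * c * s)) := by
  have ha : √(s * c / 2) ^ 2 = s * c / 2 := Real.sq_sqrt (by positivity)
  rw [← integral_Ioi_comp_div_pow (half_pos hc) two_ne_zero]
  have hsubst : ∀ u ∈ Ioi (0 : ℝ),
      ((2 : ℕ) * (c / 2) / u ^ (2 + 1)) • (levyPDF c (c / 2 / u ^ 2) *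
        Real.exp (-(s * (c / 2 / u ^ 2)))) =
      2 / √Real.pi * Real.exp (-(u ^ 2 + √(s * c / 2) ^ 2 / u ^ 2)) := by
    intro u (hu : 0 < u)
    rw [smul_eq_mul, Nat.cast_ofNat, mul_div_cancel₀ _ two_ne_zero, ← mul_assoc,
      levyPDF_div_sq hc hu, mul_assoc, ← Real.exp_add, ha]
    congr 2
    ring
  rw [setIntegral_congr_fun measurableSet_Ioi hsubst, integral_const_mul,
    integral_Ioi_exp_neg_sq_add_sq_div_sq (Real.sqrt_nonneg _)]
  have h2a : 2 * √(s * c / 2) = √(2 * c * s) := by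
    rw [show 2 * c * s = 2 ^ 2 * (s * c / 2) by ring, Real.sqrt_mul (by positivity),
      Real.sqrt_sq zero_le_two]
  rw [h2a]
  field_simp

end Levy

lemma mul_exp_neg_mul_le {ε : ℝ} (hε : 0 < ε) (t : ℝ) : t * Real.exp (-(ε * t)) ≤ ε⁻¹ := by
  rw [Real.exp_neg, ← div_eq_mul_inv, div_le_iff₀ (Real.exp_pos _), ← div_eq_inv_mul,
    le_div_iff₀' hε]
  linarith [Real.add_one_le_exp (ε * t)]

open Complex ComplexConjugate

lemma cpow_inv_two_add_neg_cpow_inv_two {x : ℂ} (hx : x.re = 0) :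
    x ^ (2⁻¹ : ℂ) + (-x) ^ (2⁻¹ : ℂ) = √(2 * ‖x‖) := by
  have hneg : -x = conj x := by apply Complex.ext <;> simp [hx]
  have harg : x.arg ≠ Real.pi := by simp [arg_eq_pi_iff, hx]
  have hconj : conj (2⁻¹ : ℂ) = 2⁻¹ := by simp [map_ofNat]
  rw [hneg, conj_cpow x _ harg, hconj, add_conj, cpow_inv_two_re, hx, add_zero]
  congr 1
  rw [show 2 * ‖x‖ = 2 ^ 2 * (‖x‖ / 2) by ring, Real.sqrt_mul (by positivity),
    Real.sqrt_sq zero_le_two]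

noncomputable def levyLaplace (c : ℝ) (z : ℂ) : ℂ :=
  ∫ t in Ioi 0, (levyPDF c t : ℂ) * cexp (-(z * t))

section LevyLaplace

variable {c : ℝ}

lemma norm_levyPDF_mul_cexp (c : ℝ) (z : ℂ) (t : ℝ) :
    ‖(levyPDF c t : ℂ) * cexp (-(z * t))‖ = levyPDF c t * Real.exp (-(z.re * t)) := by
  rw [norm_mul, norm_real, Real.norm_of_nonneg (levyPDF_nonneg c t), norm_exp]
  simp

lemma aestronglyMeasurable_levyPDF_mul_cexp (c : ℝ) (z : ℂ) :
    AEStronglyMeasurable (fun t : ℝ => (levyPDF c t : ℂ) * cexp (-(z * t)))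
      (volume.restrict (Ioi 0)) :=
  ((measurable_ofReal.comp (measurable_levyPDF c)).mul (by fun_prop)).aestronglyMeasurable

lemma norm_levyPDF_mul_cexp_le {z : ℂ} (hz : 0 ≤ z.re) {t : ℝ} (ht : 0 ≤ t) :
    ‖(levyPDF c t : ℂ) * cexp (-(z * t))‖ ≤ levyPDF c t := by
  rw [norm_levyPDF_mul_cexp]
  exact mul_le_of_le_one_right (levyPDF_nonneg c t)
    (Real.exp_le_one_iff.2 (neg_nonpos.2 (mul_nonneg hz ht)))

lemma levyLaplace_ofReal (hc : 0 < c) {s : ℝ} (hs : 0 ≤ s) :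
    levyLaplace c s = Real.exp (-√(2 * c * s)) := by
  rw [levyLaplace, ← integral_levyPDF_mul_exp_neg hc hs, ← integral_complex_ofReal]
  push_cast
  rfl

lemma continuousOn_levyLaplace (hc : 0 < c) : ContinuousOn (levyLaplace c) {z | 0 ≤ z.re} :=
  continuousOn_of_dominated (fun z _ => aestronglyMeasurable_levyPDF_mul_cexp c z)
    (fun _ hz => (ae_restrict_iff' measurableSet_Ioi).2 <| ae_of_all _ fun _ ht =>
      norm_levyPDF_mul_cexp_le hz (le_of_lt ht))
    (integrableOn_levyPDF hc) (ae_of_all _ fun _ => by fun_prop)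

lemma differentiableOn_levyLaplace (hc : 0 < c) :
    DifferentiableOn ℂ (levyLaplace c) {z | 0 < z.re} := by
  intro z₀ (hz₀ : 0 < z₀.re)
  set ε := z₀.re / 2 with hε_def
  have hε : 0 < ε := half_pos hz₀
  have hre : ∀ z ∈ Metric.ball z₀ ε, ε ≤ z.re := fun z hz => by
    have := (abs_re_le_norm (z - z₀)).trans_lt (mem_ball_iff_norm.1 hz)
    rw [sub_re, abs_lt] at this
    linarith [this.1]
  refine (hasDerivAt_integral_of_dominated_loc_of_deriv_le (Metric.ball_mem_nhds z₀ hε)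
    (F' := fun z t => (levyPDF c t : ℂ) * (cexp (-(z * t)) * -t))
    (bound := fun t => ε⁻¹ * levyPDF c t)
    (Eventually.of_forall (aestronglyMeasurable_levyPDF_mul_cexp c))
    ((integrableOn_levyPDF hc).mono' (aestronglyMeasurable_levyPDF_mul_cexp c z₀)
      ((ae_restrict_iff' measurableSet_Ioi).2 <| ae_of_all _ fun _ ht =>
        norm_levyPDF_mul_cexp_le hz₀.le (le_of_lt ht)))
    (((measurable_ofReal.comp (measurable_levyPDF c)).mul
      (by fun_prop)).aestronglyMeasurable) ?_ ((integrableOn_levyPDF hc).const_mul _)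
    (ae_of_all _ fun t z _ => ?_)).2.differentiableAt.differentiableWithinAt
  · refine (ae_restrict_iff' measurableSet_Ioi).2 <| ae_of_all _ fun t (ht : 0 < t) z hz => ?_
    rw [← mul_assoc, norm_mul, norm_levyPDF_mul_cexp, norm_neg, norm_real,
      Real.norm_of_nonneg ht.le]
    calc levyPDF c t * Real.exp (-(z.re * t)) * t
        ≤ levyPDF c t * (t * Real.exp (-(ε * t))) := by
          rw [mul_assoc, mul_comm (Real.exp _)]
          gcongr
          · exact levyPDF_nonneg c t
          · exact hre z hz
      _ ≤ ε⁻¹ * levyPDF c t := by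
          rw [mul_comm ε⁻¹]
          exact mul_le_mul_of_nonneg_left (mul_exp_neg_mul_le hε t) (levyPDF_nonneg c t)
  · exact (((hasDerivAt_id z).mul_const (t : ℂ)).neg.cexp).const_mul _ |>.congr_deriv (by simp)

lemma continuousOn_cexp_neg_cpow_inv_two (hc : 0 < c) :
    ContinuousOn (fun z : ℂ => cexp (-(2 * c * z) ^ (2⁻¹ : ℂ))) {z | 0 ≤ z.re} := by
  refine fun z (hz : 0 ≤ z.re) => (continuous_exp.continuousAt.comp (ContinuousAt.neg
    ((continuousAt_cpow_const_of_re_pos (Or.inl ?_) (by norm_num)).comp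
      (by fun_prop)))).continuousWithinAt
  rw [show (2 * c : ℂ) = ((2 * c : ℝ) : ℂ) by push_cast; ring, re_ofReal_mul]
  positivity

lemma differentiableOn_cexp_neg_cpow_inv_two (hc : 0 < c) :
    DifferentiableOn ℂ (fun z : ℂ => cexp (-(2 * c * z) ^ (2⁻¹ : ℂ))) {z | 0 < z.re} := by
  refine fun z (hz : 0 < z.re) => (DifferentiableAt.cexp (DifferentiableAt.neg
    (DifferentiableAt.cpow_const (by fun_prop) (Or.inl ?_)))).differentiableWithinAt
  rw [show (2 * c : ℂ) = ((2 * c : ℝ) : ℂ) by push_cast; ring, re_ofReal_mul]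
  positivity

lemma cexp_neg_cpow_inv_two_ofReal {s : ℝ} (hc : 0 < c) (hs : 0 ≤ s) :
    cexp (-(2 * c * s) ^ (2⁻¹ : ℂ)) = Real.exp (-√(2 * c * s)) := by
  rw [Real.sqrt_eq_rpow, ofReal_exp, ofReal_neg, ofReal_cpow (by positivity)]
  push_cast
  ring_nf

theorem levyLaplace_eq (hc : 0 < c) {z : ℂ} (hz : 0 ≤ z.re) :
    levyLaplace c z = cexp (-(2 * c * z) ^ (2⁻¹ : ℂ)) := by
  have hU : IsOpen {z : ℂ | 0 < z.re} := isOpen_lt continuous_const continuous_re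
  have hreal : ∃ᶠ z in 𝓝[≠] (1 : ℂ), levyLaplace c z = cexp (-(2 * c * z) ^ (2⁻¹ : ℂ)) := by
    have hmaps : Tendsto ((↑) : ℝ → ℂ) (𝓝[>] 1) (𝓝[≠] 1) :=
      continuous_ofReal.continuousWithinAt.tendsto_nhdsWithin fun x (hx : 1 < x) =>
        by simpa using hx.ne'
    refine hmaps.frequently (Eventually.frequently ?_)
    filter_upwards [self_mem_nhdsWithin] with s (hs : 1 < s)
    rw [levyLaplace_ofReal hc (by linarith), cexp_neg_cpow_inv_two_ofReal hc (by linarith)]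
  have hopen :
      EqOn (levyLaplace c) (fun z => cexp (-(2 * c * z) ^ (2⁻¹ : ℂ))) {z | 0 < z.re} :=
    ((differentiableOn_levyLaplace hc).analyticOnNhd hU).eqOn_of_preconnected_of_frequently_eq
      ((differentiableOn_cexp_neg_cpow_inv_two hc).analyticOnNhd hU)
      (convex_halfSpace_re_gt 0).isPreconnected (by simp) hreal
  refine hopen.of_subset_closure (continuousOn_levyLaplace hc)
    (continuousOn_cexp_neg_cpow_inv_two hc) (fun z (hz : 0 < z.re) => hz.le) ?_ hz
  rw [closure_setOfPred_lt_re]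

theorem levyLaplace_neg_mul_levyLaplace (hc : 0 < c) {z : ℂ} (hz : z.re = 0) :
    levyLaplace c (-z) * levyLaplace c z = Real.exp (-√(4 * c * ‖z‖)) := by
  have hre : (2 * c * z).re = 0 := by
    rw [show (2 * c : ℂ) = ((2 * c : ℝ) : ℂ) by push_cast; ring, re_ofReal_mul, hz, mul_zero]
  rw [levyLaplace_eq hc (by simp [hz]), levyLaplace_eq hc hz.ge, ← Complex.exp_add, mul_neg,
    ← neg_add, add_comm, cpow_inv_two_add_neg_cpow_inv_two hre]
  have hnorm : ‖(2 * c * z : ℂ)‖ = 2 * c * ‖z‖ := by simp [abs_of_pos hc]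
  rw [hnorm]
  push_cast
  ring_nf

end LevyLaplace

/-- Theorem 1: the characteristic function of the system B noise `L_n = T₂ - T₁`,
with `T₁, T₂` i.i.d. Lévy with scale `c`, equals `exp(-2√(c|ω|)) = exp(-√(c_B|ω|))`
with `c_B = 4c`; in particular it is real and symmetric in `ω`. -/
theorem systemB_noise_charFun (c : ℝ) (hc : 0 < c) :
    (∀ ω : ℝ,
      (∫ t₂ in Set.Ioi (0:ℝ), ∫ t₁ in Set.Ioi (0:ℝ),
          Complex.exp (Complex.I * ω * (t₂ - t₁)) * (levyPDF c t₂ : ℂ) * (levyPDF c t₁ : ℂ))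
        = Complex.exp (-(2 * Real.sqrt (c * |ω|) : ℝ)))
    ∧ (∀ ω : ℝ, (2 * Real.sqrt (c * |ω|) : ℝ) = Real.sqrt ((4 * c) * |ω|))
    ∧ (∀ ω : ℝ, Complex.exp (-(2 * Real.sqrt (c * |ω|) : ℝ))
        = Complex.exp (-(2 * Real.sqrt (c * |(-ω)|) : ℝ))) := by
  have hscale : ∀ ω : ℝ, 2 * √(c * |ω|) = √(4 * c * |ω|) := fun ω => by
    rw [show 4 * c * |ω| = 2 ^ 2 * (c * |ω|) by ring,
      Real.sqrt_mul (by positivity : (0 : ℝ) ≤ 2 ^ 2), Real.sqrt_sq zero_le_two]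
  refine ⟨fun ω => ?_, hscale, fun ω => by rw [abs_neg]⟩
  have hinner : ∀ t₂ : ℝ, ∫ t₁ in Ioi (0 : ℝ),
      cexp (I * ω * (t₂ - t₁)) * (levyPDF c t₂ : ℂ) * (levyPDF c t₁ : ℂ) =
        (levyPDF c t₂ : ℂ) * cexp (-(-(I * ω) * t₂)) * levyLaplace c (I * ω) := fun t₂ => by
    rw [levyLaplace, ← integral_const_mul]
    congr 1 with t₁
    rw [mul_sub, sub_eq_add_neg, Complex.exp_add]
    ring_nf
  have hre : (I * ω).re = 0 := by simp
  simp_rw [hinner, integral_mul_const]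
  rw [← levyLaplace, levyLaplace_neg_mul_levyLaplace hc hre, hscale, norm_mul, norm_I, one_mul,
    norm_real, Real.norm_eq_abs, ofReal_exp, ofReal_neg]
end

section
/- (Theorem 4, case z = 0) Let c_a > 0 and c_b > 0. The density of Z_n = T_b − T_a (with T_a, T_b independent Lévy of scales c_a, c_b) evaluated at 0 satisfies ∫₀^∞ f_{c_a}(t) · f_{c_b}(t) dt = 2√(c_a c_b) / (π (c_a + c_b)²). Equivalently, with c_C = (√c_a + √c_b)² and β = (√c_b − √c_a)/(√c_a + √c_b), this value equals 2(1 − β²)/(c_C π (1 + β²)²). -/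
open MeasureTheory Set

/-!
The product of two Lévy densities of scales `c_a, c_b` is, up to the constant `√(c_a c_b)/(2π)`,
the function `t⁻³ exp(-k/t)` with `k = (c_a + c_b)/2`. The substitution `t ↦ t⁻¹` turns its
integral into the Gamma integral `∫₀^∞ u e^{-k u} du = Γ(2)/k² = 1/k²`. The second identity is
algebra in `a = √c_a`, `b = √c_b`, where `1 - β² = 4ab/(a+b)²` and `1 + β² = 2(a²+b²)/(a+b)²`.
-/

namespace Real

lemma integral_rpow_neg_mul_exp_neg_div_Ioi {a r : ℝ} (ha : 0 < a) (hr : 0 < r) :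
    ∫ t in Ioi (0:ℝ), t ^ (-(a + 1)) * exp (-(r / t)) = (1 / r) ^ a * Gamma a := by
  rw [← integral_rpow_mul_exp_neg_mul_Ioi ha hr,
    ← integral_comp_rpow_Ioi _ (neg_ne_zero.2 one_ne_zero)]
  refine setIntegral_congr_fun measurableSet_Ioi fun t (ht : 0 < t) => ?_
  rw [rpow_neg_one, inv_rpow ht.le, ← rpow_neg ht.le, smul_eq_mul, ← mul_assoc, abs_neg, abs_one,
    one_mul, ← rpow_add ht, div_inv_eq_mul]
  ring_nf

lemma integral_exp_neg_div_div_pow_three_Ioi {k : ℝ} (hk : 0 < k) :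
    ∫ t in Ioi (0:ℝ), exp (-k / t) / t ^ 3 = 1 / k ^ 2 := by
  have h := integral_rpow_neg_mul_exp_neg_div_Ioi two_pos hk
  norm_num at h
  rw [one_div, ← h]
  refine setIntegral_congr_fun measurableSet_Ioi fun t _ => ?_
  rw [neg_div]
  ring

end Real

open Real

lemma levyPDF_mul_levyPDF {ca cb t : ℝ} (hca : 0 ≤ ca) (ht : 0 < t) :
    levyPDF ca t * levyPDF cb t
      = √(ca * cb) / (2 * π) * (exp (-((ca + cb) / 2) / t) / t ^ 3) := by
  have h2πt : 0 < 2 * π * t ^ 3 := by positivity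
  simp only [levyPDF, if_pos ht]
  rw [mul_mul_mul_comm, ← exp_add, ← sqrt_mul (div_nonneg hca h2πt.le),
    div_mul_div_comm, ← sq, sqrt_div' _ (sq_nonneg _), sqrt_sq h2πt.le]
  field_simp
  ring_nf

lemma integral_levyPDF_mul_levyPDF {ca cb : ℝ} (hca : 0 ≤ ca) (hcb : 0 ≤ cb) :
    ∫ t in Ioi (0:ℝ), levyPDF ca t * levyPDF cb t = 2 * √(ca * cb) / (π * (ca + cb) ^ 2) := by
  rw [setIntegral_congr_fun measurableSet_Ioi fun t ht => levyPDF_mul_levyPDF hca ht,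
    integral_const_mul]
  rcases (add_nonneg hca hcb).eq_or_lt with hsum | hsum
  · obtain rfl : ca = 0 := by linarith
    simp
  · rw [integral_exp_neg_div_div_pow_three_Ioi (half_pos hsum)]
    field_simp

lemma two_mul_div_pi_mul_sq_add_sq_sq_eq {a b : ℝ} (hab : a + b ≠ 0) :
    2 * (a * b) / (π * (a ^ 2 + b ^ 2) ^ 2)
      = 2 * (1 - ((b - a) / (a + b)) ^ 2)
          / ((a + b) ^ 2 * π * (1 + ((b - a) / (a + b)) ^ 2) ^ 2) := by
  have hsq : a ^ 2 + b ^ 2 ≠ 0 := by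
    rw [sq, sq, Ne, mul_self_add_mul_self_eq_zero]
    rintro ⟨rfl, rfl⟩
    exact hab (add_zero 0)
  field_simp
  ring

/-- Theorem 4, case `z = 0`: the density of `Z_n = T_b - T_a` at 0 equals
`2√(c_a c_b)/(π(c_a + c_b)²) = 2(1-β²)/(c_C π (1+β²)²)`. -/
theorem systemC_noise_pdf_zero (ca cb : ℝ) (hca : 0 < ca) (hcb : 0 < cb)
    (cC β : ℝ) (hcC : cC = (Real.sqrt ca + Real.sqrt cb) ^ 2)
    (hβ : β = (Real.sqrt cb - Real.sqrt ca) / (Real.sqrt ca + Real.sqrt cb)) :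
    (∫ t in Set.Ioi (0:ℝ), levyPDF ca t * levyPDF cb t)
        = 2 * Real.sqrt (ca * cb) / (Real.pi * (ca + cb) ^ 2)
    ∧ (2 * Real.sqrt (ca * cb) / (Real.pi * (ca + cb) ^ 2) : ℝ)
        = 2 * (1 - β ^ 2) / (cC * Real.pi * (1 + β ^ 2) ^ 2) := by
  refine ⟨integral_levyPDF_mul_levyPDF hca.le hcb.le, ?_⟩
  subst hcC hβ
  have h := two_mul_div_pi_mul_sq_add_sq_sq_eq (a := √ca) (b := √cb) (by positivity)
  rwa [sq_sqrt hca.le, sq_sqrt hcb.le, ← sqrt_mul hca.le] at h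
end

section
/- The density g_c of the difference of two independent Lévy random variables with scale c > 0, namely g_c(u) = ∫_ℝ f_c(t + u) · f_c(t) dt, is an even function of u and is strictly decreasing on (0, ∞); in particular g_c is unimodal with its unique mode at u = 0. -/
/-
Substituting `q = (t (t + u))^(-1/2)` in `∫ f_c(t + u) f_c(t) dt` (for `u ≥ 0`, only `t > 0`
contributes) turns the product of the two Lévy densities into the kernel
`(c / π) q exp(-(c q / 2) w) / w` with `w = √((u q)² + 4)`. For fixed `q > 0` this kernel is
strictly decreasing in `u ≥ 0`, and at `u = 0` it is `(c / 2π) q e^(-c q)`, an integrable majorant.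
Hence `g_c` is strictly decreasing on `[0, ∞)`; evenness is translation invariance of Lebesgue
measure, and unimodality follows from `g_c(u) = g_c(|u|)`.
-/

open MeasureTheory Set

/-- Density of the difference of two independent Lévy random variables with scale `c`. -/
noncomputable def gdiff (c u : ℝ) : ℝ := ∫ t : ℝ, levyPDF c (t + u) * levyPDF c t

open Real

theorem setIntegral_lt_setIntegral_of_forall_lt {X : Type*} [MeasurableSpace X] {μ : Measure X}
    {s : Set X} {f g : X → ℝ} (hs : MeasurableSet s) (hμs : μ s ≠ 0)
    (hf : IntegrableOn f s μ) (hg : IntegrableOn g s μ) (hfg : ∀ x ∈ s, f x < g x) :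
    ∫ x in s, f x ∂μ < ∫ x in s, g x ∂μ := by
  have hpos : 0 < ∫ x in s, (g x - f x) ∂μ := by
    rw [setIntegral_pos_iff_support_of_nonneg_ae
      ((ae_restrict_iff' hs).2 (.of_forall fun x hx => (sub_pos.2 (hfg x hx)).le)) (hg.sub hf)]
    refine (pos_iff_ne_zero.2 hμs).trans_le (measure_mono fun x hx => ⟨?_, hx⟩)
    exact (sub_pos.2 (hfg x hx)).ne'
  rwa [integral_sub hg hf, sub_pos] at hpos

theorem levyPDF_of_nonpos {c x : ℝ} (hx : x ≤ 0) : levyPDF c x = 0 :=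
  if_neg hx.not_gt

theorem gdiff_neg (c u : ℝ) : gdiff c (-u) = gdiff c u := by
  rw [gdiff, ← integral_add_right_eq_self _ u]
  simp only [add_neg_cancel_right, gdiff, mul_comm]

theorem gdiff_abs (c u : ℝ) : gdiff c |u| = gdiff c u := by
  rcases le_total 0 u with h | h
  · rw [abs_of_nonneg h]
  · rw [abs_of_nonpos h, gdiff_neg]

/-- The integrand of `gdiff` after the substitution `q = (t (t + u))^(-1/2)`, see
`gdiff_eq_integral_levyDiffKernel`. -/
noncomputable def levyDiffKernel (c u q : ℝ) : ℝ :=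
  q * exp (-(c * q / 2) * √((u * q) ^ 2 + 4)) / √((u * q) ^ 2 + 4)

theorem levyDiffKernel_zero_left (c q : ℝ) : levyDiffKernel c 0 q = q * exp (-(c * q)) / 2 := by
  have : √(4 : ℝ) = 2 := by
    rw [show (4 : ℝ) = 2 ^ 2 by norm_num, sqrt_sq zero_le_two]
  simp only [levyDiffKernel, zero_mul, zero_pow two_ne_zero, zero_add, this]
  ring_nf

theorem levyDiffKernel_nonneg (c u : ℝ) {q : ℝ} (hq : 0 ≤ q) : 0 ≤ levyDiffKernel c u q := by
  unfold levyDiffKernel; positivity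

theorem continuous_levyDiffKernel (c u : ℝ) : Continuous (levyDiffKernel c u) := by
  unfold levyDiffKernel
  refine Continuous.div (by fun_prop) (by fun_prop) fun q => ?_
  exact (sqrt_pos.2 (by positivity)).ne'

theorem levyDiffKernel_strictAntiOn {c q : ℝ} (hc : 0 ≤ c) (hq : 0 < q) :
    StrictAntiOn (fun u => levyDiffKernel c u q) (Ici 0) := by
  intro u hu v hv huv
  have hw : √((u * q) ^ 2 + 4) < √((v * q) ^ 2 + 4) := by
    have : u * q < v * q := mul_lt_mul_of_pos_right huv hq
    have : 0 ≤ u * q := mul_nonneg hu hq.le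
    exact sqrt_lt_sqrt (by positivity) (by nlinarith)
  have hw0 : 0 < √((u * q) ^ 2 + 4) := sqrt_pos.2 (by positivity)
  have hexp : exp (-(c * q / 2) * √((v * q) ^ 2 + 4)) ≤
      exp (-(c * q / 2) * √((u * q) ^ 2 + 4)) :=
    exp_le_exp.2 (by nlinarith [mul_nonneg hc hq.le])
  exact div_lt_div₀' (mul_le_mul_of_nonneg_left hexp hq.le) hw (by positivity) hw0

theorem levyDiffKernel_abs (c u q : ℝ) : levyDiffKernel c |u| q = levyDiffKernel c u q := by
  simp only [levyDiffKernel, mul_pow, sq_abs]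

theorem integrableOn_levyDiffKernel {c : ℝ} (hc : 0 < c) (u : ℝ) :
    IntegrableOn (levyDiffKernel c u) (Ioi 0) := by
  have hmajorant : IntegrableOn (levyDiffKernel c 0) (Ioi 0) := by
    rw [show levyDiffKernel c 0 = fun q => q * exp (-(c * q)) / 2 from
      funext (levyDiffKernel_zero_left c)]
    have h := integrableOn_rpow_mul_exp_neg_mul_rpow (s := 1) (p := 1) (by norm_num) one_pos hc
    simp only [rpow_one, neg_mul] at h
    exact h.div_const 2
  refine hmajorant.mono' (continuous_levyDiffKernel c u).aestronglyMeasurable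
    ((ae_restrict_iff' measurableSet_Ioi).2 (.of_forall fun q (hq : 0 < q) => ?_))
  rw [Real.norm_of_nonneg (levyDiffKernel_nonneg c u hq.le), ← levyDiffKernel_abs]
  exact (levyDiffKernel_strictAntiOn hc.le hq).antitoneOn self_mem_Ici (abs_nonneg u)
    (abs_nonneg u)

theorem levyPDF_mul_levyPDF_s12 {c u t : ℝ} (hc : 0 ≤ c) (ht : 0 < t) (htu : 0 < t + u) :
    levyPDF c (t + u) * levyPDF c t =
      (2 * t + u) / (2 * √(t * (t + u)) ^ 3) *
        (c / π * levyDiffKernel c u (√(t * (t + u)))⁻¹) := by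
  set r := √(t * (t + u))
  have : 0 < 2 * t + u := by linarith
  have hr : 0 < r := sqrt_pos.2 (by positivity)
  have hr2 : r ^ 2 = t * (t + u) := sq_sqrt (by positivity)
  have hw : √((u * r⁻¹) ^ 2 + 4) = (2 * t + u) / r := by
    rw [← sqrt_sq (by positivity : 0 ≤ (2 * t + u) / r)]
    congr 1
    field_simp
    linear_combination 4 * hr2
  have hsqrt : √(c / (2 * π * (t + u) ^ 3)) * √(c / (2 * π * t ^ 3)) = c / (2 * π * r ^ 3) := by
    rw [← sqrt_mul (by positivity), ← sqrt_sq (by positivity : 0 ≤ c / (2 * π * r ^ 3))]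
    congr 1
    field_simp
    rw [show r ^ 6 = (r ^ 2) ^ 3 by ring, hr2]
    ring
  have hexp : exp (-c / (2 * (t + u))) * exp (-c / (2 * t)) =
      exp (-(c * r⁻¹ / 2) * ((2 * t + u) / r)) := by
    rw [← exp_add]
    congr 1
    field_simp
    rw [hr2]
    ring
  rw [levyPDF, if_pos htu, levyPDF, if_pos ht, levyDiffKernel, hw,
    mul_mul_mul_comm, hsqrt, hexp]
  field_simp

theorem image_inv_sqrt_mul_add_Ioi {u : ℝ} (hu : 0 ≤ u) :
    (fun t => (√(t * (t + u)))⁻¹) '' Ioi 0 = Ioi 0 := by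
  refine Subset.antisymm (image_subset_iff.2 fun t (ht : 0 < t) => ?_) fun q (hq : 0 < q) => ?_
  · have : 0 < t + u := by linarith
    exact inv_pos.2 (sqrt_pos.2 (by positivity))
  · set S := √(u ^ 2 + 4 * (q⁻¹) ^ 2)
    have hS2 : S ^ 2 = u ^ 2 + 4 * (q⁻¹) ^ 2 := sq_sqrt (by positivity)
    have huS : u < S := by nlinarith [sqrt_nonneg (u ^ 2 + 4 * (q⁻¹) ^ 2), inv_pos.2 hq]
    refine ⟨(S - u) / 2, show 0 < (S - u) / 2 by linarith, ?_⟩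
    have hroot : (S - u) / 2 * ((S - u) / 2 + u) = q⁻¹ ^ 2 := by linear_combination hS2 / 4
    simp only [hroot, sqrt_sq (inv_pos.2 hq).le, inv_inv]

theorem hasDerivAt_inv_sqrt_mul_add {t u : ℝ} (h : 0 < t * (t + u)) :
    HasDerivAt (fun t => (√(t * (t + u)))⁻¹) (-(2 * t + u) / (2 * √(t * (t + u)) ^ 3)) t := by
  have hr : 0 < √(t * (t + u)) := sqrt_pos.2 h
  have hP : HasDerivAt (fun t => t * (t + u)) (2 * t + u) t :=
    ((hasDerivAt_id' t).mul ((hasDerivAt_id' t).add_const u)).congr_deriv (by ring)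
  exact ((hP.sqrt h.ne').inv hr.ne').congr_deriv (by field_simp)

theorem gdiff_eq_integral_levyDiffKernel {c u : ℝ} (hc : 0 ≤ c) (hu : 0 ≤ u) :
    gdiff c u = c / π * ∫ q in Ioi 0, levyDiffKernel c u q := by
  have hpos : ∀ t ∈ Ioi (0 : ℝ), 0 < t * (t + u) := fun t (ht : 0 < t) => by positivity
  have hderiv : ∀ t ∈ Ioi (0 : ℝ), HasDerivWithinAt (fun t => (√(t * (t + u)))⁻¹)
      (-(2 * t + u) / (2 * √(t * (t + u)) ^ 3)) (Ioi 0) t := fun t ht =>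
    (hasDerivAt_inv_sqrt_mul_add (hpos t ht)).hasDerivWithinAt
  have hanti : StrictAntiOn (fun t => (√(t * (t + u)))⁻¹) (Ioi 0) :=
    fun s (hs : 0 < s) t _ hst => by
      have := hpos s hs
      have : 0 < √(s * (s + u)) := sqrt_pos.2 this
      dsimp only
      gcongr
  rw [← integral_const_mul, ← image_inv_sqrt_mul_add_Ioi hu,
    integral_image_eq_integral_abs_deriv_smul measurableSet_Ioi hderiv hanti.injOn, gdiff,
    ← setIntegral_eq_integral_of_forall_compl_eq_zero fun t (ht : ¬0 < t) => by
      rw [levyPDF_of_nonpos (not_lt.1 ht), mul_zero]]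
  refine setIntegral_congr_fun measurableSet_Ioi fun t (ht : 0 < t) => ?_
  rw [smul_eq_mul, abs_div, abs_neg, abs_of_pos (by positivity : 0 < 2 * t + u),
    abs_of_pos (by positivity), levyPDF_mul_levyPDF_s12 hc ht (by positivity)]

theorem gdiff_strictAntiOn {c : ℝ} (hc : 0 < c) : StrictAntiOn (gdiff c) (Ici 0) := by
  intro u hu v hv huv
  rw [gdiff_eq_integral_levyDiffKernel hc.le hu, gdiff_eq_integral_levyDiffKernel hc.le hv]
  refine mul_lt_mul_of_pos_left ?_ (by positivity)
  exact setIntegral_lt_setIntegral_of_forall_lt measurableSet_Ioi (by simp)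
    (integrableOn_levyDiffKernel hc v) (integrableOn_levyDiffKernel hc u)
    fun q hq => levyDiffKernel_strictAntiOn hc.le hq hu hv huv

/-- The density of the difference of two independent Lévy random variables with scale
`c` is even, strictly decreasing on `(0,∞)`, and unimodal with unique mode at 0. -/
theorem gdiff_even_strictAnti (c : ℝ) (hc : 0 < c) :
    (∀ u : ℝ, gdiff c (-u) = gdiff c u)
    ∧ StrictAntiOn (gdiff c) (Set.Ioi (0:ℝ))
    ∧ (∀ u : ℝ, u ≠ 0 → gdiff c u < gdiff c 0) := by
  have hanti := gdiff_strictAntiOn hc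
  refine ⟨gdiff_neg c, hanti.mono Ioi_subset_Ici_self, fun u hu => ?_⟩
  rw [← gdiff_abs]
  exact hanti self_mem_Ici (abs_nonneg u) (abs_pos.2 hu)
end

section
/- (Theorem 6 specialized to the system A Lévy noise, α = 1/2, β = 1) For every c > 0, the logarithmic moment of the Lévy distribution with location 0 and scale c satisfies ∫₀^∞ (log t) · √(c/(2π t³)) · exp(−c/(2t)) dt = log(2c) + γ, where γ is the Euler–Mascheroni constant. Consequently the geometric power S₀ = exp(E[log|T_n|]) of the Lévy noise T_n equals 2c·e^γ, in agreement with the general formula S₀(N) = c · G_γ^{1/α − 1} · (1 + β² tan²(πα/2))^{1/(2α)} with α = 1/2, β = 1, G_γ = e^γ. -/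
/-!
The substitution `u = c / (2t)` turns the Lévy density into the density `u^(-1/2) e^(-u) / √π`
of the Gamma distribution with shape `1/2`, and `log t` into `log (c/2) - log u`. So the
logarithmic moment is `log (c/2) - E[log U]` for `U ~ Γ(1/2, 1)`, and differentiating the Gamma
integral under the integral sign gives `E[log U] = Γ'(1/2) / Γ(1/2) = -γ - 2 log 2`.
-/

open MeasureTheory Set

open Real

local notation "γ" => eulerMascheroniConstant

section ConstDivSubstitution

variable {E : Type*} [NormedAddCommGroup E] [NormedSpace ℝ E] {b : ℝ}

lemma image_const_div_Ioi (hb : 0 < b) : (fun x : ℝ => b / x) '' Ioi 0 = Ioi 0 := by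
  ext u
  constructor
  · rintro ⟨x, hx, rfl⟩
    exact div_pos hb hx
  · intro hu
    exact ⟨b / u, div_pos hb hu, div_div_cancel₀ hb.ne'⟩

lemma injOn_const_div_Ioi (hb : b ≠ 0) : InjOn (fun x : ℝ => b / x) (Ioi 0) := by
  intro x _ y _ h
  simp only [div_eq_mul_inv] at h
  exact inv_injective (mul_left_cancel₀ hb h)

lemma hasDerivWithinAt_const_div_Ioi {x : ℝ} (hx : x ∈ Ioi (0 : ℝ)) :
    HasDerivWithinAt (fun y : ℝ => b / y) (-b / x ^ 2) (Ioi 0) x := by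
  simpa [div_eq_mul_inv, neg_div] using
    ((hasDerivAt_inv (ne_of_gt hx)).const_mul b).hasDerivWithinAt

theorem integral_comp_const_div_Ioi (g : ℝ → E) (hb : 0 < b) :
    ∫ x in Ioi 0, (b / x ^ 2) • g (b / x) = ∫ u in Ioi 0, g u := by
  have := integral_image_eq_integral_abs_deriv_smul measurableSet_Ioi
    (fun x hx => hasDerivWithinAt_const_div_Ioi hx) (injOn_const_div_Ioi hb.ne') g
  simp only [image_const_div_Ioi hb, abs_div, abs_neg, abs_of_pos hb, abs_sq] at this
  exact this.symm

end ConstDivSubstitution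

theorem Real.hasDerivAt_Gamma_integral {s : ℝ} (hs : 0 < s) :
    HasDerivAt Gamma (∫ t in Ioi 0, t ^ (s - 1) * (log t * exp (-t))) s := by
  have hGamma : Complex.GammaIntegral =ᶠ[nhds (s : ℂ)] Complex.Gamma := by
    filter_upwards [(isOpen_lt continuous_const Complex.continuous_re).mem_nhds
      (by simpa using hs : (0 : ℝ) < (s : ℂ).re)] with z hz
    exact (Complex.Gamma_eq_integral hz).symm
  have hreal : ∫ t : ℝ in Ioi 0, (t : ℂ) ^ ((s : ℂ) - 1) * (log t * exp (-t)) =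
      ↑(∫ t in Ioi 0, t ^ (s - 1) * (log t * exp (-t))) := by
    rw [← integral_complex_ofReal]
    refine setIntegral_congr_fun measurableSet_Ioi fun t (ht : 0 < t) => ?_
    push_cast [Complex.ofReal_cpow ht.le]
    rfl
  have := ((Complex.hasDerivAt_GammaIntegral (by simpa using hs)).congr_of_eventuallyEq
    hGamma.symm).real_of_complex
  rw [hreal, Complex.ofReal_re] at this
  convert this using 1
  ext x
  rw [Complex.Gamma_ofReal, Complex.ofReal_re]

/-- On `(0, ∞)` this is `ProbabilityTheory.gammaPDFReal (1 / 2) 1`, since `Γ(1/2) = √π`. -/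
noncomputable def gammaOneHalfPDF (u : ℝ) : ℝ := u ^ (-(1 / 2) : ℝ) * exp (-u) / √π

lemma integrableOn_gammaOneHalfPDF : IntegrableOn gammaOneHalfPDF (Ioi 0) := by
  refine IntegrableOn.congr_fun ((GammaIntegral_convergent one_half_pos).div_const √π)
    (fun u _ => ?_) measurableSet_Ioi
  norm_num [gammaOneHalfPDF, mul_comm]

lemma integral_gammaOneHalfPDF : ∫ u in Ioi 0, gammaOneHalfPDF u = 1 := by
  have hΓ : ∫ u in Ioi 0, u ^ (-(1 / 2) : ℝ) * exp (-u) = √π := by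
    rw [← Gamma_one_half_eq, Gamma_eq_integral one_half_pos]
    norm_num [mul_comm]
  simp only [gammaOneHalfPDF]
  rw [integral_div, hΓ, div_self (sqrt_pos.mpr pi_pos).ne']

lemma integral_log_mul_gammaOneHalfPDF :
    ∫ u in Ioi 0, log u * gammaOneHalfPDF u = -(γ + 2 * log 2) := by
  have hΓ' : ∫ u in Ioi 0, u ^ (-(1 / 2) : ℝ) * (log u * exp (-u)) = -√π * (γ + 2 * log 2) := by
    have := (hasDerivAt_Gamma_integral one_half_pos).unique hasDerivAt_Gamma_one_half
    rwa [show (1 / 2 : ℝ) - 1 = -(1 / 2) by norm_num] at this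
  have hlog (u : ℝ) :
      log u * gammaOneHalfPDF u = u ^ (-(1 / 2) : ℝ) * (log u * exp (-u)) / √π := by
    simp only [gammaOneHalfPDF]
    ring
  simp only [hlog]
  rw [integral_div, hΓ', neg_mul, neg_div, mul_div_cancel_left₀ _ (sqrt_pos.mpr pi_pos).ne']

lemma integrableOn_log_mul_gammaOneHalfPDF :
    IntegrableOn (fun u => log u * gammaOneHalfPDF u) (Ioi 0) := by
  refine Integrable.of_integral_ne_zero ?_
  rw [integral_log_mul_gammaOneHalfPDF, neg_ne_zero]
  have := one_half_lt_eulerMascheroniConstant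
  have := log_pos one_lt_two
  positivity

lemma levyPDF_eq_gammaOneHalfPDF {c t : ℝ} (hc : 0 < c) (ht : 0 < t) :
    levyPDF c t = (c / 2 / t ^ 2) * gammaOneHalfPDF (c / 2 / t) := by
  have hsqrt : √(c / (2 * π * t ^ 3)) = c / 2 / t ^ 2 / (√(c / 2 / t) * √π) := by
    rw [← sqrt_mul (by positivity), eq_div_iff (by positivity),
      ← sqrt_sq (by positivity : 0 ≤ c / 2 / t ^ 2), ← sqrt_mul (by positivity)]
    congr 1
    field_simp
  rw [levyPDF, if_pos ht, gammaOneHalfPDF, hsqrt, rpow_neg (by positivity), ← sqrt_eq_rpow]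
  ring_nf

theorem integral_log_mul_levyPDF {c : ℝ} (hc : 0 < c) :
    ∫ t in Ioi 0, log t * levyPDF c t = log (2 * c) + γ := by
  have hb : 0 < c / 2 := by positivity
  have hsubst : ∀ t ∈ Ioi (0 : ℝ), log t * levyPDF c t =
      (c / 2 / t ^ 2) • ((log (c / 2) - log (c / 2 / t)) * gammaOneHalfPDF (c / 2 / t)) := by
    intro t (ht : 0 < t)
    rw [levyPDF_eq_gammaOneHalfPDF hc ht, smul_eq_mul, log_div hb.ne' ht.ne']
    ring
  rw [setIntegral_congr_fun measurableSet_Ioi hsubst,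
    integral_comp_const_div_Ioi (fun u => (log (c / 2) - log u) * gammaOneHalfPDF u) hb]
  simp only [sub_mul]
  rw [integral_sub (integrableOn_gammaOneHalfPDF.const_mul _)
      integrableOn_log_mul_gammaOneHalfPDF,
    integral_const_mul, integral_gammaOneHalfPDF, integral_log_mul_gammaOneHalfPDF,
    log_div hc.ne' two_ne_zero, log_mul two_ne_zero hc.ne']
  ring

/-- Theorem 6 specialized to the system A Lévy noise (`α = 1/2`, `β = 1`): the
logarithmic moment of the Lévy distribution with scale `c` is `log(2c) + γ`, so the
geometric power equals `2c·e^γ`. -/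
theorem levy_log_moment (c : ℝ) (hc : 0 < c) :
    (∫ t in Set.Ioi (0:ℝ),
        Real.log t * (Real.sqrt (c / (2 * Real.pi * t ^ 3)) * Real.exp (-c / (2 * t))))
      = Real.log (2 * c) + Real.eulerMascheroniConstant
    ∧ Real.exp (∫ t in Set.Ioi (0:ℝ), Real.log t * levyPDF c t)
      = 2 * c * Real.exp Real.eulerMascheroniConstant := by
  refine ⟨?_, ?_⟩
  · rw [← integral_log_mul_levyPDF hc]
    refine setIntegral_congr_fun measurableSet_Ioi fun t (ht : 0 < t) => ?_
    rw [levyPDF, if_pos ht]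
  · rw [integral_log_mul_levyPDF hc, exp_add, exp_log (by positivity)]
end
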